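/- arXiv:2405.06317 — 2 statements merged into one kernel-verified Lean document; each statement's English description precedes it below -/
import Mathlib

section
/- Every nonzero polynomial P \in \mathbb{C}[z] of degree p can be written as P(z) = A \prod_{j=1}^N (z - z_j)^{\underline{n_j}} where A is a nonzero constant, n_1 + \cdots + n_N = p, and for each j, the factorization arises by repeatedly extracting from the remaining factor a zero z_j of length n_j with the property that z_j - 1 is not a zero of that factor. -/
open Polynomial

/-- The forward difference of a polynomial: `ΔP(z) = P(z+1) - P(z)`. -/
noncomputable def pdelta (P : Polynomial ℂ) : Polynomial ℂ := P.comp (X + C 1) - P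

/-!
A nonconstant `P` has a root, and only finitely many, so walking down from a root in steps of `1`
reaches a root `w` with `w - 1` not a root; walking up, `w, w + 1, …, w + n - 1` are roots and
`w + n` is not. These roots give the factor `(X - w)^{\underline n}`, and since `P` vanishes at
`w, …, w + k - 1` we get `Δ^k P(w) = P(w + k)` for `k ≤ n`, so `w` is a zero of length exactly `n`.
Induction on the degree of the cofactor finishes the factorization.
-/

open Finset

section FallingFactorial

variable {R : Type*} [CommRing R]

noncomputable def fallingFactorial (w : R) (n : ℕ) : R[X] :=
  ∏ k ∈ range n, (X - C w - C (k : R))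

lemma fallingFactorial_eq_prod_X_sub_C (w : R) (n : ℕ) :
    fallingFactorial w n = ∏ k ∈ range n, (X - C (w + k)) := by
  simp only [fallingFactorial, C_add, sub_sub]

lemma monic_fallingFactorial (w : R) (n : ℕ) : (fallingFactorial w n).Monic := by
  rw [fallingFactorial_eq_prod_X_sub_C]
  exact monic_prod_of_monic _ _ fun _ _ => monic_X_sub_C _

lemma natDegree_fallingFactorial [Nontrivial R] (w : R) (n : ℕ) :
    (fallingFactorial w n).natDegree = n := by
  rw [fallingFactorial_eq_prod_X_sub_C, natDegree_prod_of_monic _ _ fun _ _ => monic_X_sub_C _]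
  simp only [natDegree_X_sub_C, sum_const, card_range, smul_eq_mul, mul_one]

lemma fallingFactorial_dvd {K : Type*} [Field K] [CharZero K] {P : K[X]} {w : K} {n : ℕ}
    (h : ∀ i < n, P.IsRoot (w + i)) : fallingFactorial w n ∣ P := by
  rw [fallingFactorial_eq_prod_X_sub_C]
  refine prod_dvd_of_coprime ?_ fun i hi => dvd_iff_isRoot.2 (h i (mem_range.1 hi))
  exact (pairwise_coprime_X_sub_C ((add_right_injective w).comp Nat.cast_injective)).set_pairwise _

end FallingFactorial

section Roots

variable {R : Type*} [CommRing R] [IsDomain R] {P : R[X]}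

lemma exists_not_isRoot_of_injective (hP : P ≠ 0) {f : ℕ → R} (hf : f.Injective) :
    ∃ k, ¬ P.IsRoot (f k) := by
  by_contra! h
  exact hP (P.eq_zero_of_infinite_isRoot (Set.infinite_of_injective_forall_mem hf h))

variable [CharZero R]

lemma exists_isRoot_not_isRoot_sub_one (hP : P ≠ 0) {w₀ : R} (h₀ : P.IsRoot w₀) :
    ∃ w, P.IsRoot w ∧ ¬ P.IsRoot (w - 1) := by
  by_contra! h
  have hdown : ∀ k : ℕ, P.IsRoot (w₀ - k) := by
    intro k
    induction k with
    | zero => simpa using h₀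
    | succ k ih => simpa [sub_sub] using h _ ih
  obtain ⟨k, hk⟩ :=
    exists_not_isRoot_of_injective hP ((sub_right_injective (b := w₀)).comp Nat.cast_injective)
  exact hk (hdown k)

lemma exists_isRoot_run (hP : P ≠ 0) (w : R) :
    ∃ n : ℕ, (∀ i < n, P.IsRoot (w + i)) ∧ ¬ P.IsRoot (w + n) := by
  classical
  have h := exists_not_isRoot_of_injective hP ((add_right_injective w).comp Nat.cast_injective)
  exact ⟨Nat.find h, fun i hi => not_not.1 (Nat.find_min h hi), Nat.find_spec h⟩

end Roots

lemma eval_pdelta (P : ℂ[X]) (x : ℂ) : (pdelta P).eval x = P.eval (x + 1) - P.eval x := by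
  simp [pdelta, eval_comp]

lemma eval_iterate_pdelta {P : ℂ[X]} {w : ℂ} {n : ℕ} (h : ∀ i < n, P.IsRoot (w + i)) :
    (pdelta^[n] P).eval w = P.eval (w + n) := by
  induction n generalizing P with
  | zero => simp
  | succ n ih =>
    have hΔ : ∀ i < n, (pdelta P).IsRoot (w + i) := fun i hi => by
      simpa [IsRoot, eval_pdelta, (h i (by omega)).eq_zero, add_assoc] using h (i + 1) (by omega)
    rw [Function.iterate_succ_apply, ih hΔ, eval_pdelta, (h n n.lt_succ_self).eq_zero]
    push_cast
    ring_nf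

def IsZeroOfLength (P : ℂ[X]) (w : ℂ) (n : ℕ) : Prop :=
  (∀ k < n, (pdelta^[k] P).eval w = 0) ∧ (pdelta^[n] P).eval w ≠ 0

lemma isZeroOfLength_of_isRoot {P : ℂ[X]} {w : ℂ} {n : ℕ} (h : ∀ i < n, P.IsRoot (w + i))
    (hn : ¬ P.IsRoot (w + n)) : IsZeroOfLength P w n :=
  ⟨fun k hk => (eval_iterate_pdelta fun i hi => h i (hi.trans hk)).trans (h k hk),
    (eval_iterate_pdelta h).trans_ne hn⟩

lemma exists_zeroOfLength_factor {P : ℂ[X]} (hP : 0 < P.natDegree) :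
    ∃ (w : ℂ) (n : ℕ) (R : ℂ[X]), 1 ≤ n ∧ P = fallingFactorial w n * R ∧
      IsZeroOfLength P w n ∧ ¬ P.IsRoot (w - 1) := by
  have hP0 : P ≠ 0 := ne_zero_of_natDegree_gt hP
  obtain ⟨w₀, h₀⟩ := Complex.exists_root (natDegree_pos_iff_degree_pos.1 hP)
  obtain ⟨w, hw, hw₁⟩ := exists_isRoot_not_isRoot_sub_one hP0 h₀
  obtain ⟨n, hroots, hn⟩ := exists_isRoot_run hP0 w
  have hn₁ : 1 ≤ n := Nat.one_le_iff_ne_zero.2 fun h0 => hn (by simpa [h0] using hw)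
  obtain ⟨R, hR⟩ := fallingFactorial_dvd hroots
  exact ⟨w, n, R, hn₁, hR, isZeroOfLength_of_isRoot hroots hn, hw₁⟩

structure IsFallingFactorization (P : ℂ[X]) (N : ℕ) (A : ℂ) (z : Fin N → ℂ) (m : Fin N → ℕ)
    (Q : Fin (N + 1) → ℂ[X]) : Prop where
  ne_zero : A ≠ 0
  one_le : ∀ j, 1 ≤ m j
  sum_eq_natDegree : ∑ j, m j = P.natDegree
  head : Q 0 = P
  last : Q (Fin.last N) = C A
  factor : ∀ j : Fin N, Q j.castSucc = fallingFactorial (z j) (m j) * Q j.succ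
  isZeroOfLength : ∀ j, IsZeroOfLength (Q j.castSucc) (z j) (m j)
  not_isRoot_sub_one : ∀ j, ¬ (Q j.castSucc).IsRoot (z j - 1)

namespace IsFallingFactorization

lemma const {A : ℂ} (hA : A ≠ 0) :
    IsFallingFactorization (C A) 0 A Fin.elim0 Fin.elim0 fun _ => C A :=
  ⟨hA, nofun, by simp, rfl, rfl, nofun, nofun, nofun⟩

lemma cons {R : ℂ[X]} {N : ℕ} {A : ℂ} {z : Fin N → ℂ} {m : Fin N → ℕ} {Q : Fin (N + 1) → ℂ[X]}
    (h : IsFallingFactorization R N A z m Q) (hR : R ≠ 0) {P : ℂ[X]} {w : ℂ} {n : ℕ} (hn : 1 ≤ n)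
    (hPR : P = fallingFactorial w n * R) (hw : IsZeroOfLength P w n) (hw₁ : ¬ P.IsRoot (w - 1)) :
    IsFallingFactorization P (N + 1) A (Fin.cons w z) (Fin.cons n m) (Fin.cons P Q) := by
  refine ⟨h.ne_zero, ?_, ?_, rfl, ?_, ?_, ?_, ?_⟩
  · exact Fin.forall_fin_succ.2 ⟨hn, h.one_le⟩
  · rw [Fin.sum_cons, h.sum_eq_natDegree, hPR,
      (monic_fallingFactorial w n).natDegree_mul' (by simpa using hR), natDegree_fallingFactorial]
  · rw [← Fin.succ_last, Fin.cons_succ, h.last]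
  · refine Fin.forall_fin_succ.2 ⟨?_, fun j => ?_⟩
    · simpa [h.head] using hPR
    · simpa [← Fin.succ_castSucc] using h.factor j
  · refine Fin.forall_fin_succ.2 ⟨by simpa using hw, fun j => ?_⟩
    simpa [← Fin.succ_castSucc] using h.isZeroOfLength j
  · refine Fin.forall_fin_succ.2 ⟨by simpa using hw₁, fun j => ?_⟩
    simpa [← Fin.succ_castSucc] using h.not_isRoot_sub_one j

end IsFallingFactorization

theorem exists_isFallingFactorization {P : ℂ[X]} (hP : P ≠ 0) :
    ∃ N A z m Q, IsFallingFactorization P N A z m Q := by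
  induction hd : P.natDegree using Nat.strong_induction_on generalizing P with
  | _ d ih =>
  rcases Nat.eq_zero_or_pos d with rfl | hpos
  · rw [eq_C_of_natDegree_eq_zero hd] at hP ⊢
    exact ⟨0, _, _, _, _, .const (C_ne_zero.1 hP)⟩
  obtain ⟨w, n, R, hn, hPR, hw, hw₁⟩ := exists_zeroOfLength_factor (hd ▸ hpos)
  have hR : R ≠ 0 := by rintro rfl; exact hP (by simpa using hPR)
  have hdeg : R.natDegree < d := by
    rw [← hd, hPR, (monic_fallingFactorial w n).natDegree_mul' (by simpa using hR),
      natDegree_fallingFactorial]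
    omega
  obtain ⟨N, A, z, m, Q, h⟩ := ih _ hdeg hR rfl
  exact ⟨_, _, _, _, _, h.cons hR hn hPR hw hw₁⟩

/-- every nonzero polynomial `P` of degree `p` can be written as
`P(z) = A ∏_{j=1}^N (z - z_j)^{\underline{n_j}}` with `A ≠ 0` and `n_1 + ⋯ + n_N = p`,
the factorization arising by repeatedly extracting from the remaining factor `Q j` a zero
`z_j` of length `n_j` such that `z_j - 1` is not a zero of `Q j`. -/
theorem stmt_8 (P : Polynomial ℂ) (hP : P ≠ 0) :
    ∃ (N : ℕ) (A : ℂ) (z : Fin N → ℂ) (m : Fin N → ℕ) (Q : Fin (N + 1) → Polynomial ℂ),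
      A ≠ 0 ∧ (∀ j, 1 ≤ m j) ∧ (∑ j, m j) = P.natDegree ∧
      Q 0 = P ∧ Q (Fin.last N) = C A ∧
      (∀ j : Fin N, Q j.castSucc
          = (∏ k ∈ Finset.range (m j), (X - C (z j) - C (k : ℂ))) * Q j.succ) ∧
      (∀ j : Fin N,
        (∀ k < m j, ((pdelta^[k]) (Q j.castSucc)).eval (z j) = 0) ∧
        ((pdelta^[m j]) (Q j.castSucc)).eval (z j) ≠ 0 ∧
        (Q j.castSucc).eval (z j - 1) ≠ 0) := by
  obtain ⟨N, A, z, m, Q, h⟩ := exists_isFallingFactorization hP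
  exact ⟨N, A, z, m, Q, h.ne_zero, h.one_le, h.sum_eq_natDegree, h.head, h.last, h.factor,
    fun j => ⟨(h.isZeroOfLength j).1, (h.isZeroOfLength j).2, h.not_isRoot_sub_one j⟩⟩
end

section
/- Difference Fermat equation for polynomials with a constant term: if a and b are nonconstant polynomials over \mathbb{C}, c is a nonzero constant, n \geq 2, and a^{\underline{n}}(z) := a(z)a(z-1)\cdots a(z-n+1) (similarly for b), with a^{\underline{n}}, b^{\underline{n}}, c^n pairwise relatively shifting prime, then a^{\underline{n}} + b^{\underline{n}} = c^n is impossible. -/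
open Polynomial

/-- The shifted product `p^{\underline{n}}(z) = p(z)p(z-1)⋯p(z-n+1)`. -/
noncomputable def pfall (p : Polynomial ℂ) (n : ℕ) : Polynomial ℂ :=
  ∏ k ∈ Finset.range n, p.comp (X - C (k : ℂ))

/-- `z - z₀` is a common shifting divisor of `f` and `g`: there are factorizations
`f = (z - z₁)^{\underline{m₁}} F`, `g = (z - z₂)^{\underline{n₁}} G` with
`fg = (z - z₀)^{\underline{m₁+n₁}} F G` and `z₀ ∈ {z₁, z₂}`. -/
def CommonShiftingDivisor (f g : Polynomial ℂ) (z0 : ℂ) : Prop :=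
  ∃ (z1 z2 : ℂ) (m1 n1 : ℕ) (F G : Polynomial ℂ), 1 ≤ m1 ∧ 1 ≤ n1 ∧
    f = (∏ k ∈ Finset.range m1, (X - C z1 - C (k : ℂ))) * F ∧
    g = (∏ k ∈ Finset.range n1, (X - C z2 - C (k : ℂ))) * G ∧
    (z0 = z1 ∨ z0 = z2) ∧
    f * g = (∏ k ∈ Finset.range (m1 + n1), (X - C z0 - C (k : ℂ))) * (F * G)

/-- `f` and `g` are relatively shifting prime: no common shifting divisor. -/
def RelShiftingPrime (f g : Polynomial ℂ) : Prop :=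
  ∀ z0 : ℂ, ¬CommonShiftingDivisor f g z0

/-!
Write `f = a^{\underline{m+1}}`, `g = b^{\underline{m+1}}` and `Δh = h(z+1) - h(z)`. Since
`f + g` is a nonzero constant, `f` and `g` are coprime and `Δf + Δg = 0`, while
`Δ(p^{\underline{m+1}}) = p^{\underline{m}} · (p(z+1) - p(z-m))`. Hence `b^{\underline{m}}`,
being coprime to `a^{\underline{m}}`, divides `a(z+1) - a(z-m)`, a polynomial of degree below
`deg a = deg b ≤ deg b^{\underline{m}}` (here `m ≥ 1`). So `a(z+1) = a(z-m)`: `a` is periodic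
with period `m + 1`, hence constant. Shifts are written `taylor r p = p(z + r)`.
-/

namespace Polynomial

section CommRing

variable {R : Type*} [CommRing R]

theorem natDegree_eq_of_add_eq_C {f g : R[X]} {c : R} (h : f + g = C c)
    (hf : 0 < f.natDegree) : g.natDegree = f.natDegree := by
  rw [eq_sub_of_add_eq' h, natDegree_sub_eq_right_of_natDegree_lt (by rwa [natDegree_C])]

theorem natDegree_taylor_sub_taylor_lt (p : R[X]) (s t : R) (hp : 0 < p.natDegree) :
    (taylor s p - taylor t p).natDegree < p.natDegree := by
  by_cases h : taylor s p - taylor t p = 0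
  · rwa [h, natDegree_zero]
  refine natDegree_lt_natDegree h ?_
  rw [← degree_taylor p s]
  refine degree_sub_lt_left (by rw [degree_taylor, degree_taylor]) ?_
    (by simp only [leadingCoeff_taylor])
  rw [Ne, taylor_eq_zero]
  rintro rfl
  simp at hp

theorem natDegree_eq_zero_of_taylor_eq_self [IsDomain R] [CharZero R] {p : R[X]} {s : R}
    (hs : s ≠ 0) (h : taylor s p = p) : p.natDegree = 0 := by
  have hperiodic : ∀ k : ℕ, p.eval (k * s) = p.eval 0 := by
    intro k
    induction k with
    | zero => simp
    | succ k ih => rw [Nat.cast_succ, add_one_mul, ← taylor_eval, h, ih]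
  suffices p = C (p.eval 0) by rw [this, natDegree_C]
  refine eq_of_infinite_eval_eq _ _ (Set.Infinite.mono ?_ (Set.infinite_range_of_injective
    ((mul_left_injective₀ hs).comp (Nat.cast_injective (R := R)))))
  rintro _ ⟨k, rfl⟩
  simp [hperiodic k]

end CommRing

theorem isCoprime_of_add_eq_C {K : Type*} [Field K] {f g : K[X]} {c : K} (hc : c ≠ 0)
    (h : f + g = C c) : IsCoprime f g :=
  ⟨C c⁻¹, C c⁻¹, by rw [← mul_add, h, ← C_mul, inv_mul_cancel₀ hc, C_1]⟩

end Polynomial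

theorem pfall_eq_prod_taylor (p : ℂ[X]) (n : ℕ) :
    pfall p n = ∏ k ∈ Finset.range n, taylor (-(k : ℂ)) p := by
  simp only [pfall, taylor_apply, map_neg, sub_eq_add_neg]

theorem pfall_succ (p : ℂ[X]) (m : ℕ) :
    pfall p (m + 1) = pfall p m * taylor (-(m : ℂ)) p := by
  rw [pfall_eq_prod_taylor, pfall_eq_prod_taylor, Finset.prod_range_succ]

theorem taylor_one_pfall_succ (p : ℂ[X]) (m : ℕ) :
    taylor 1 (pfall p (m + 1)) = taylor 1 p * pfall p m := by
  rw [pfall_eq_prod_taylor, pfall_eq_prod_taylor, ← taylorAlgHom_apply, map_prod,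
    Finset.prod_range_succ', mul_comm]
  simp only [taylorAlgHom_apply, taylor_taylor]
  congr 1
  · simp
  · exact Finset.prod_congr rfl fun k _ => by push_cast; ring_nf

theorem natDegree_pfall (p : ℂ[X]) (n : ℕ) : (pfall p n).natDegree = n * p.natDegree := by
  rcases eq_or_ne p 0 with rfl | hp
  · rcases n with _ | n <;> simp [pfall_eq_prod_taylor]
  rw [pfall_eq_prod_taylor, natDegree_prod _ _ fun k _ => by rwa [Ne, taylor_eq_zero]]
  simp [natDegree_taylor]

theorem taylor_one_pfall_succ_sub (p : ℂ[X]) (m : ℕ) :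
    taylor 1 (pfall p (m + 1)) - pfall p (m + 1) =
      pfall p m * (taylor 1 p - taylor (-(m : ℂ)) p) := by
  rw [taylor_one_pfall_succ, pfall_succ]
  ring

theorem stmt_18_general (a b : Polynomial ℂ) (ha : 1 ≤ a.natDegree)
    (c : ℂ) (hc : c ≠ 0) (n : ℕ) (hn : 2 ≤ n) :
    pfall a n + pfall b n ≠ C (c ^ n) := by
  intro heq
  obtain ⟨m, rfl⟩ : ∃ m, n = m + 1 := ⟨n - 1, by omega⟩
  have hdeg : b.natDegree = a.natDegree := by
    have := natDegree_eq_of_add_eq_C heq (by rw [natDegree_pfall]; positivity)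
    rw [natDegree_pfall, natDegree_pfall] at this
    exact Nat.eq_of_mul_eq_mul_left m.succ_pos this
  have hdiff : pfall a m * (taylor 1 a - taylor (-(m : ℂ)) a)
      = -(pfall b m * (taylor 1 b - taylor (-(m : ℂ)) b)) := by
    have := congrArg (taylor 1) heq
    rw [map_add, taylor_C] at this
    rw [← taylor_one_pfall_succ_sub, ← taylor_one_pfall_succ_sub]
    linear_combination this - heq
  have hcop : IsCoprime (pfall b m) (pfall a m) := by
    have := isCoprime_of_add_eq_C (pow_ne_zero _ hc) heq
    rw [pfall_succ, pfall_succ] at this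
    exact this.of_mul_left_left.of_mul_right_left.symm
  have hdvd : pfall b m ∣ taylor 1 a - taylor (-(m : ℂ)) a :=
    hcop.dvd_of_dvd_mul_left ⟨_, hdiff.trans (neg_mul_eq_mul_neg _ _)⟩
  have hshift : taylor 1 a = taylor (-(m : ℂ)) a := by
    refine sub_eq_zero.1 (eq_zero_of_dvd_of_natDegree_lt hdvd ?_)
    calc (taylor 1 a - taylor (-(m : ℂ)) a).natDegree < a.natDegree :=
          natDegree_taylor_sub_taylor_lt a _ _ ha
      _ ≤ m * b.natDegree := by rw [hdeg]; exact Nat.le_mul_of_pos_left _ (by omega)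
      _ = (pfall b m).natDegree := (natDegree_pfall b m).symm
  have hperiodic : taylor ((m : ℂ) + 1) a = a := by
    simpa [taylor_taylor, add_comm] using congrArg (taylor (m : ℂ)) hshift
  have := natDegree_eq_zero_of_taylor_eq_self (by exact_mod_cast m.succ_ne_zero) hperiodic
  omega

/-- if `a, b` are nonconstant polynomials, `c` a nonzero constant, `n ≥ 2`,
and `a^{\underline{n}}, b^{\underline{n}}, cⁿ` are pairwise relatively shifting prime, then
`a^{\underline{n}} + b^{\underline{n}} = cⁿ` is impossible. -/
theorem stmt_18 (a b : Polynomial ℂ) (ha : 1 ≤ a.natDegree) (hb : 1 ≤ b.natDegree)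
    (c : ℂ) (hc : c ≠ 0) (n : ℕ) (hn : 2 ≤ n)
    (hab : RelShiftingPrime (pfall a n) (pfall b n))
    (hac : RelShiftingPrime (pfall a n) (C (c ^ n)))
    (hbc : RelShiftingPrime (pfall b n) (C (c ^ n))) :
    pfall a n + pfall b n ≠ C (c ^ n) :=
  stmt_18_general a b ha c hc n hn
end
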